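/- Let φ be an endomorphism of the free metabelian group M = F_2/F_2'' defined on generators by x ↦ x^α y^β z^γ, y ↦ x^a y^b z^c, where z = [x,y] and α, β, γ, a, b, c ∈ Z. Then the image of z under φ in the module F_2'/F_2'' over Z[x^{±1}, y^{±1}] is z · ( c(1 - x^α y^β) - γ(1 - x^a y^b) + y^β (1-x^α)(1-y^b)/((1-x)(1-y)) - y^b (1-x^a)(1-y^β)/((1-x)(1-y)) ). -/

import Mathlib

/- STATEMENT 7 (Lemma 4.1): Let φ be the endomorphism of the free metabelian group
   `M = F₂/F₂''` with `x ↦ x^α y^β z^γ`, `y ↦ x^a y^b z^c`, where `z = [x,y]`.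
   Then the image of `z` is
   `z · ( c(1 - x^α y^β) - γ(1 - x^a y^b) + y^β (1-x^α)(1-y^b)/((1-x)(1-y))
          - y^b (1-x^a)(1-y^β)/((1-x)(1-y)) )`.
   Using the identities `[x^p,y^q] = z·((1-x^p)(1-y^q)/((1-x)(1-y)))` and
   `[g, z^q] = z·q(1-g)` (with `[u,v] = u⁻¹v⁻¹uv`), this module element is represented
   by the group word
   `[x^α y^β, z^c] · [x^a y^b, z^γ]⁻¹ · (y^{-β} [x^α, y^b] y^β) · (y^{-b} [x^a, y^β] y^b)⁻¹`,
   so the claim is the congruence of `φ(z)` with this word modulo `F₂''`. -/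

namespace Stmt7

abbrev F := FreeGroup (Fin 2)

def x : F := FreeGroup.of 0
def y : F := FreeGroup.of 1

/-- `z = [x,y] = x⁻¹y⁻¹xy`. -/
def z : F := x⁻¹ * y⁻¹ * x * y

/-- `[u,v] = u⁻¹v⁻¹uv`. -/
def comm (u v : F) : F := u⁻¹ * v⁻¹ * u * v

/-- The endomorphism `x ↦ x^α y^β z^γ`, `y ↦ x^a y^b z^c` of the free group
(inducing the corresponding endomorphism of `F₂/F₂''`). -/
def φ (α β γ a b c : ℤ) : F →* F :=
  FreeGroup.lift (fun i => if i = 0 then x ^ α * y ^ β * z ^ γ else x ^ a * y ^ b * z ^ c)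

/-- The word representing the module element
`z·(c(1-x^αy^β) - γ(1-x^ay^b) + y^β(1-x^α)(1-y^b)/((1-x)(1-y)) - y^b(1-x^a)(1-y^β)/((1-x)(1-y)))`. -/
def rhs (α β γ a b c : ℤ) : F :=
  comm (x ^ α * y ^ β) (z ^ c) * (comm (x ^ a * y ^ b) (z ^ γ))⁻¹ *
    (y ^ (-β) * comm (x ^ α) (y ^ b) * y ^ β) *
    (y ^ (-b) * comm (x ^ a) (y ^ β) * y ^ b)⁻¹

/-!
In the metabelian group `F ⧸ F''`, `φ z = [x^α y^β z^γ, x^a y^b z^c]`. As `z` lies in the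
abelian normal subgroup `F' ⧸ F''`, the factors `z^γ` and `z^c` split off as `[x^α y^β, z^c]`
and `[x^a y^b, z^γ]⁻¹`, leaving `[x^α y^β, x^a y^b]`; as `x^α` commutes with `x^a` and `y^β`
with `y^b`, the commutator identities reduce that to the two conjugated commutators
`y^{-β} [x^α, y^b] y^β` and `(y^{-b} [x^a, y^β] y^b)⁻¹`.
-/

open scoped commutatorElement

section Metabelian

variable {G : Type*} [Group G]

def lcomm (u v : G) : G := u⁻¹ * v⁻¹ * u * v

lemma lcomm_inv (u v : G) : (lcomm u v)⁻¹ = lcomm v u := by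
  simp only [lcomm]; group

lemma lcomm_mul_left (u v w : G) : lcomm (u * v) w = v⁻¹ * lcomm u w * v * lcomm v w := by
  simp only [lcomm]; group

lemma lcomm_mul_right (u v w : G) : lcomm u (v * w) = lcomm u w * (w⁻¹ * lcomm u v * w) := by
  simp only [lcomm]; group

lemma lcomm_eq_one_of_commute {u v : G} (h : Commute u v) : lcomm u v = 1 := by
  rw [lcomm, mul_assoc _ u, h.eq]; group

lemma lcomm_mem_commutator (u v : G) : lcomm u v ∈ commutator G := by
  have : lcomm u v = ⁅u⁻¹, v⁻¹⁆ := by rw [lcomm, commutatorElement_def]; group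
  rw [this]
  exact Subgroup.commutator_mem_commutator (Subgroup.mem_top _) (Subgroup.mem_top _)

lemma map_lcomm {H : Type*} [Group H] (f : G →* H) (u v : G) :
    f (lcomm u v) = lcomm (f u) (f v) := by
  simp only [lcomm, map_mul, map_inv]

lemma lcomm_zpow_mul_zpow (u v : G) (α β a b : ℤ) :
    lcomm (u ^ α * v ^ β) (u ^ a * v ^ b) =
      v ^ (-β) * lcomm (u ^ α) (v ^ b) * v ^ β * (v ^ (-b) * lcomm (u ^ a) (v ^ β) * v ^ b)⁻¹ := by
  have hu : lcomm (u ^ α) (u ^ a) = 1 := lcomm_eq_one_of_commute ((Commute.refl u).zpow_zpow α a)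
  have hv : lcomm (v ^ β) (v ^ b) = 1 := lcomm_eq_one_of_commute ((Commute.refl v).zpow_zpow β b)
  rw [lcomm_mul_left, lcomm_mul_right, lcomm_mul_right, hu, hv, ← lcomm_inv (u ^ a), zpow_neg,
    zpow_neg]
  group

lemma commute_of_mem_commutator (hG : derivedSeries G 2 = ⊥) {g k : G}
    (hg : g ∈ commutator G) (hk : k ∈ commutator G) : Commute g k := by
  rw [← commutatorElement_eq_one_iff_commute, ← Subgroup.mem_bot, ← hG, derivedSeries_succ,
    derivedSeries_one]
  exact Subgroup.commutator_mem_commutator hg hk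

lemma derivedSeries_quotient_derivedSeries (n : ℕ) :
    derivedSeries (G ⧸ derivedSeries G n) n = ⊥ := by
  rw [← map_derivedSeries_eq (QuotientGroup.mk'_surjective _), Subgroup.map_eq_bot_iff,
    QuotientGroup.ker_mk']

lemma lcomm_mul_mul_of_mem_commutator (hG : derivedSeries G 2 = ⊥) (u v : G) {p r : G}
    (hp : p ∈ commutator G) (hr : r ∈ commutator G) :
    lcomm (u * p) (v * r) = lcomm u r * (lcomm v p)⁻¹ * lcomm u v := by
  have hcomm : ∀ {g k : G}, g ∈ commutator G → k ∈ commutator G → Commute g k :=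
    commute_of_mem_commutator hG
  have hpr : lcomm p r = 1 := lcomm_eq_one_of_commute (hcomm hp hr)
  have conj : ∀ {h g : G}, h ∈ commutator G → g ∈ commutator G → h⁻¹ * g * h = g :=
    fun hh hg => by rw [(hcomm hh hg).inv_left.eq, inv_mul_cancel_right]
  have huv := lcomm_mem_commutator u v
  calc lcomm (u * p) (v * r)
      = p⁻¹ * (lcomm u r * lcomm u v) * p * lcomm p v := by
        rw [lcomm_mul_left, lcomm_mul_right, lcomm_mul_right, hpr, conj hr huv,
          conj hr (lcomm_mem_commutator p v), one_mul]
    _ = lcomm u r * (lcomm v p)⁻¹ * lcomm u v := by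
        rw [conj hp (mul_mem (lcomm_mem_commutator u r) huv), lcomm_inv, mul_assoc, mul_assoc,
          (hcomm huv (lcomm_mem_commutator p v)).eq, ← mul_assoc]

lemma lcomm_zpow_mul_zpow_mul_zpow_lcomm (hG : derivedSeries G 2 = ⊥) (u v : G)
    (α β γ a b c : ℤ) :
    lcomm (u ^ α * v ^ β * lcomm u v ^ γ) (u ^ a * v ^ b * lcomm u v ^ c) =
      lcomm (u ^ α * v ^ β) (lcomm u v ^ c) * (lcomm (u ^ a * v ^ b) (lcomm u v ^ γ))⁻¹ *
        (v ^ (-β) * lcomm (u ^ α) (v ^ b) * v ^ β) *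
        (v ^ (-b) * lcomm (u ^ a) (v ^ β) * v ^ b)⁻¹ := by
  have hz := lcomm_mem_commutator u v
  rw [lcomm_mul_mul_of_mem_commutator hG _ _ (zpow_mem hz γ) (zpow_mem hz c),
    lcomm_zpow_mul_zpow]
  simp only [mul_assoc]

end Metabelian

lemma φ_apply_z (α β γ a b c : ℤ) :
    φ α β γ a b c z = lcomm (x ^ α * y ^ β * z ^ γ) (x ^ a * y ^ b * z ^ c) := by
  simp [z, lcomm, φ, x, y]

theorem image_of_z (α β γ a b c : ℤ) :
    (φ α β γ a b c) z * (rhs α β γ a b c)⁻¹ ∈ derivedSeries F 2 := by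
  rw [← QuotientGroup.eq_one_iff, QuotientGroup.mk_mul, QuotientGroup.mk_inv, mul_inv_eq_one]
  have key := lcomm_zpow_mul_zpow_mul_zpow_lcomm (derivedSeries_quotient_derivedSeries 2)
    (QuotientGroup.mk' (derivedSeries F 2) x) (QuotientGroup.mk' _ y) α β γ a b c
  have hz : z = lcomm x y := rfl
  simp only [← map_zpow, ← map_mul, ← map_inv, ← map_lcomm, ← hz, ← φ_apply_z] at key
  exact key

end Stmt7
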